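/- Let P* ⊆ P(n̄) be admissible. Let y₁, y₂, z₁, z₂ ∈ P* with |y₁| = |z₁| ≥ 2 and let r, s ∈ {1,…,|y₁|} be such that y₁^[r] = z₁^[s] = y₁ ∩ z₁, y₂ ∼ y₁, z₂ ∼ z₁, and y₂^[r] ∼ z₂^[s] ∼ y₁ ∩ z₁. Then there exist θ, δ ∈ I_{P*} with rank(θ) = rank(δ) = |y₁| such that dom(θδ) = y₂^[r] and im(θδ) = z₂^[s]. -/

import Mathlib

namespace IOFpar

/-- A partial injection on the chain `{1, …, n}`: a partial function with domain and
image contained in `{1, …, n}` that is injective where defined. -/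
structure PInj (n : ℕ) where
  f : ℕ → Option ℕ
  mem_bounds : ∀ ⦃x y : ℕ⦄, f x = some y → x ∈ Finset.Icc 1 n ∧ y ∈ Finset.Icc 1 n
  inj : ∀ ⦃x₁ x₂ y : ℕ⦄, f x₁ = some y → f x₂ = some y → x₁ = x₂

/-- The domain of a partial injection. -/
def PInj.dom {n : ℕ} (α : PInj n) : Finset ℕ :=
  (Finset.Icc 1 n).filter fun x => (α.f x).isSome

open Classical in
/-- The image of a partial injection. -/
noncomputable def PInj.im {n : ℕ} (α : PInj n) : Finset ℕ :=
  (Finset.Icc 1 n).filter fun y => ∃ x, α.f x = some y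

/-- The rank of a partial injection: the size of its domain. -/
def PInj.rank {n : ℕ} (α : PInj n) : ℕ := α.dom.card

/-- The value of `α` at `x` (with junk value `0` outside the domain). -/
def PInj.app {n : ℕ} (α : PInj n) (x : ℕ) : ℕ := (α.f x).getD 0

/-- Composition of partial injections: `α.comp β` applies `α` first, then `β`
(so it corresponds to the product `αβ` with arguments written on the left). -/
def PInj.comp {n : ℕ} (α β : PInj n) : PInj n where
  f x := (α.f x).bind β.f
  mem_bounds := by
    intro x y h
    rcases Option.bind_eq_some_iff.mp h with ⟨z, hz, hzy⟩
    exact ⟨(α.mem_bounds hz).1, (β.mem_bounds hzy).2⟩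
  inj := by
    intro x₁ x₂ y h₁ h₂
    rcases Option.bind_eq_some_iff.mp h₁ with ⟨z₁, hz₁, hz₁y⟩
    rcases Option.bind_eq_some_iff.mp h₂ with ⟨z₂, hz₂, hz₂y⟩
    obtain rfl : z₁ = z₂ := β.inj hz₁y hz₂y
    exact α.inj hz₁ hz₂

/-- The empty transformation `ε`. -/
def epsilon (n : ℕ) : PInj n where
  f _ := none
  mem_bounds := by intro x y h; simp at h
  inj := by intro x₁ x₂ y h; simp at h

/-- The fence (zig-zag) order on `{1, …, n}`: `k ≺ m` iff `|k - m| = 1`, `k` is odd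
and `m` is even. -/
def fence (k m : ℕ) : Prop := (m = k + 1 ∨ k = m + 1) ∧ Odd k ∧ Even m

/-- `IOF n` is the set `IOF_n^par` of all partial injections on `{1, …, n}` that are
order-preserving, parity-preserving, fence-preserving, and whose inverse is also
fence-preserving. -/
def IOF (n : ℕ) : Set (PInj n) :=
  {α | (∀ ⦃x y x' y' : ℕ⦄, α.f x = some x' → α.f y = some y' → x < y → x' < y') ∧
       (∀ ⦃x y : ℕ⦄, α.f x = some y → x % 2 = y % 2) ∧
       (∀ ⦃x y x' y' : ℕ⦄, α.f x = some x' → α.f y = some y' → fence x y → fence x' y') ∧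
       (∀ ⦃x y x' y' : ℕ⦄, α.f x = some x' → α.f y = some y' → fence x' y' → fence x y)}

/-- The increasing enumeration of a finite set of naturals. -/
def sortedList (A : Finset ℕ) : List ℕ := A.sort (· ≤ ·)

/-- The relation `∼` on subsets of `{1, …, n}`:
`A ∼ B` iff `|A| = |B|`, corresponding elements (in increasing order) have the
same parity, and consecutive elements are at distance 1 in `A` iff they are in `B`. -/
def sim (A B : Finset ℕ) : Prop :=
  A.card = B.card ∧
  (∀ (r : ℕ) (hA : r < (sortedList A).length) (hB : r < (sortedList B).length),
    (sortedList A)[r] % 2 = (sortedList B)[r] % 2) ∧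
  (∀ (r : ℕ) (hA : r + 1 < (sortedList A).length) (hB : r + 1 < (sortedList B).length),
    ((sortedList A)[r + 1] = (sortedList A)[r] + 1 ↔
      (sortedList B)[r + 1] = (sortedList B)[r] + 1))

/-- `P ⊆ P(n̄)` is admissible: it contains `∅`, is convex, and is closed under `∼`. -/
def Admissible (n : ℕ) (P : Set (Finset ℕ)) : Prop :=
  (∀ A ∈ P, A ⊆ Finset.Icc 1 n) ∧
  (∅ : Finset ℕ) ∈ P ∧
  (∀ A ∈ P, ∀ B ∈ P, ∀ C : Finset ℕ, A ⊆ C → C ⊆ B → C ∈ P) ∧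
  (∀ y ∈ P, ∀ z : Finset ℕ, z ⊆ Finset.Icc 1 n → sim z y → z ∈ P)

/-- `I_X = {α ∈ IOF_n^par : dom(α) ∈ X}`. -/
def IX (n : ℕ) (X : Set (Finset ℕ)) : Set (PInj n) :=
  {α | α ∈ IOF n ∧ α.dom ∈ X}

/-- An ideal of the monoid `IOF_n^par`. -/
def IsIdeal (n : ℕ) (I : Set (PInj n)) : Prop :=
  I.Nonempty ∧ I ⊆ IOF n ∧ ∀ a ∈ I, ∀ b ∈ IOF n, a.comp b ∈ I ∧ b.comp a ∈ I

/-- `del y t` is `y^[t+1]` in the paper's (1-based) notation: `y` with its `t`-th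
smallest element removed (`t` being 0-based here). -/
def del (y : Finset ℕ) (t : ℕ) : Finset ℕ := y.erase ((sortedList y).getD t 0)

/-- `x ⊑ y`: `x` is obtained from `y` by removing one element. -/
def sqsub (x y : Finset ℕ) : Prop := ∃ t < y.card, x = del y t

/-- `A_Γ = {Δ ∈ P : Δ ∼ Γ}`. -/
def Aset (P : Set (Finset ℕ)) (Γ : Finset ℕ) : Set (Finset ℕ) :=
  {Δ ∈ P | sim Δ Γ}

/-- `B_Γ = {Δ^[t] : Δ ∈ A_Γ, t ∈ {1,…,|Δ|}}`. -/
def Bset (P : Set (Finset ℕ)) (Γ : Finset ℕ) : Set (Finset ℕ) :=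
  {D | ∃ Δ ∈ Aset P Γ, ∃ t < Δ.card, D = del Δ t}

/-- `B = {B_Γ : Γ ∈ P, |Γ| ≥ 2, |A_Γ| ≥ 2}`. -/
def Bfam (P : Set (Finset ℕ)) : Set (Set (Finset ℕ)) :=
  {E | ∃ Γ ∈ P, 2 ≤ Γ.card ∧ 2 ≤ (Aset P Γ).ncard ∧ E = Bset P Γ}

/-- `C = {{g} : g ∈ P, (g ⊑ y for some y ∈ P with y ≁ z for all z ∈ P \ {y}) or
(g ⋢ z for all z ∈ P)}`. -/
def Cfam (P : Set (Finset ℕ)) : Set (Set (Finset ℕ)) :=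
  {D | ∃ g ∈ P, D = {g} ∧
    ((∃ y ∈ P, sqsub g y ∧ ∀ z ∈ P, z ≠ y → ¬ sim y z) ∨ (∀ z ∈ P, ¬ sqsub g z))}

/-- `BC_{Δ₁} = {Δ ∈ B ∪ C : x ∼ y for all x ∈ Δ, y ∈ Δ₁}`. -/
def BCset (P : Set (Finset ℕ)) (Δ₁ : Set (Finset ℕ)) : Set (Set (Finset ℕ)) :=
  {Δ ∈ Bfam P ∪ Cfam P | ∀ x ∈ Δ, ∀ y ∈ Δ₁, sim x y}

/-- `T_Δ = {c ∈ I_P : dom(c) ∈ Δ, im(c) ∈ Δ}`. -/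
def Tset (n : ℕ) (P : Set (Finset ℕ)) (Δ : Set (Finset ℕ)) : Set (PInj n) :=
  {c ∈ IX n P | c.dom ∈ Δ ∧ c.im ∈ Δ}

/-- `T_Q` for a pair `Q = (Q₁, Q₂)`. -/
def TQ (n : ℕ) (P : Set (Finset ℕ)) (Q₁ Q₂ : Set (Set (Finset ℕ))) : Set (PInj n) :=
  {c ∈ IX n P | (∃ Δ ∈ Q₁, c.dom ∈ Δ) ∧ (∃ Δ ∈ Q₂, c.im ∈ Δ)}

/-- `I_P^u`: the elements of `I_P` that are not expressible in the special product form. -/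
def Iu (n : ℕ) (P : Set (Finset ℕ)) : Set (PInj n) :=
  {α ∈ IX n P | ¬ ∃ y₁ ∈ P, ∃ z₁ ∈ P, ∃ y₂ ∈ P, ∃ z₂ ∈ P, ∃ r < y₁.card, ∃ s < y₁.card,
    y₁.card = z₁.card ∧ 2 ≤ y₁.card ∧
    sim y₂ y₁ ∧ sim z₂ z₁ ∧
    del y₁ r = y₁ ∩ z₁ ∧ del z₁ s = y₁ ∩ z₁ ∧
    sim (del y₂ r) (del z₂ s) ∧ sim (del z₂ s) (y₁ ∩ z₁) ∧
    α.dom = del y₂ r ∧ α.im = del z₂ s}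

/-- `T` is a subsemigroup of `S` (a subset of `S` closed under composition). -/
def IsSubsemigroup (n : ℕ) (S T : Set (PInj n)) : Prop :=
  T ⊆ S ∧ ∀ a ∈ T, ∀ b ∈ T, a.comp b ∈ T

/-- `T` is a maximal subsemigroup of `S`. -/
def IsMaxSubsemigroup (n : ℕ) (S T : Set (PInj n)) : Prop :=
  IsSubsemigroup n S T ∧ T ≠ S ∧
  ∀ U : Set (PInj n), IsSubsemigroup n S U → T ⊆ U → U ⊆ S → U = T ∨ U = S

/-- The left "translate set" `Ma` in the monoid `M = IOF_n^par`. -/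
def lset (n : ℕ) (a : PInj n) : Set (PInj n) := {c | ∃ m ∈ IOF n, m.comp a = c}

/-- The right "translate set" `aM` in the monoid `M = IOF_n^par`. -/
def rset (n : ℕ) (a : PInj n) : Set (PInj n) := {c | ∃ m ∈ IOF n, a.comp m = c}

/-- The two-sided "translate set" `MaM` in the monoid `M = IOF_n^par`. -/
def jset (n : ℕ) (a : PInj n) : Set (PInj n) :=
  {c | ∃ m₁ ∈ IOF n, ∃ m₂ ∈ IOF n, (m₁.comp a).comp m₂ = c}

/-!
Take for `θ` the order-preserving bijection `y₂ → y₁` and for `δ` the order-preserving bijection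
`z₁ → z₂`. Both lie in `IOF_n^par`: since `∼` matches parities and adjacencies position by
position, such a matching preserves order, parity and the fence relation in both directions.
The product `θδ` is defined at the `i`-th element of `y₂` iff the `i`-th element of `y₁` lies in
`z₁`, i.e. in `y₁ ∩ z₁ = y₁^[r]`, i.e. iff `i ≠ r`; dually its image is `z₂^[s]`.
-/

section SortedList

variable {A : Finset ℕ}

lemma length_sortedList (A : Finset ℕ) : (sortedList A).length = A.card :=
  Finset.length_sort _

lemma mem_sortedList {x : ℕ} : x ∈ sortedList A ↔ x ∈ A :=
  Finset.mem_sort _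

lemma sortedList_getElem_lt_getElem_iff {i j : ℕ} {hi : i < (sortedList A).length}
    {hj : j < (sortedList A).length} : (sortedList A)[i] < (sortedList A)[j] ↔ i < j :=
  (Finset.sortedLT_sort A).getElem_lt_getElem_iff

lemma sortedList_getElem_inj_iff {i j : ℕ} {hi : i < (sortedList A).length}
    {hj : j < (sortedList A).length} : (sortedList A)[i] = (sortedList A)[j] ↔ i = j :=
  (Finset.sort_nodup _ _).getElem_inj_iff

lemma sortedList_index_succ_of_getElem_eq_succ {i j : ℕ} {hi : i < (sortedList A).length}
    {hj : j < (sortedList A).length} (h : (sortedList A)[j] = (sortedList A)[i] + 1) :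
    j = i + 1 := by
  have hij : i < j := (sortedList_getElem_lt_getElem_iff (A := A)).mp (by omega)
  by_contra hne
  have hmid : i + 1 < (sortedList A).length := by omega
  have h₁ : (sortedList A)[i] < (sortedList A)[i + 1] :=
    sortedList_getElem_lt_getElem_iff.mpr (Nat.lt_succ_self i)
  have h₂ : (sortedList A)[i + 1] < (sortedList A)[j] :=
    sortedList_getElem_lt_getElem_iff.mpr (by omega)
  omega

lemma mem_del_iff {r : ℕ} (hr : r < A.card) {x : ℕ} :
    x ∈ del A r ↔ ∃ i, ∃ _ : i < (sortedList A).length, i ≠ r ∧ (sortedList A)[i] = x := by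
  have hr' : r < (sortedList A).length := (length_sortedList A).symm ▸ hr
  rw [del, List.getD_eq_getElem _ _ hr', Finset.mem_erase, ← mem_sortedList,
    List.mem_iff_getElem]
  constructor
  · rintro ⟨hne, i, hi, rfl⟩
    exact ⟨i, hi, fun h => hne (by subst h; rfl), rfl⟩
  · rintro ⟨i, hi, hir, rfl⟩
    exact ⟨fun h => hir (sortedList_getElem_inj_iff.mp h), i, hi, rfl⟩

end SortedList

section Sim

variable {A B : Finset ℕ}

lemma sim.symm (h : sim A B) : sim B A :=
  ⟨h.1.symm, fun r hB hA => (h.2.1 r hA hB).symm, fun r hB hA => (h.2.2 r hA hB).symm⟩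

lemma sim.fence_getElem (h : sim A B) {i j : ℕ} {hi : i < (sortedList A).length}
    {hj : j < (sortedList A).length} (hi' : i < (sortedList B).length)
    (hj' : j < (sortedList B).length) (hf : fence (sortedList A)[i] (sortedList A)[j]) :
    fence (sortedList B)[i] (sortedList B)[j] := by
  obtain ⟨hadj, hodd, heven⟩ := hf
  have hpi := h.2.1 i hi hi'
  have hpj := h.2.1 j hj hj'
  rw [Nat.odd_iff] at hodd
  rw [Nat.even_iff] at heven
  refine ⟨?_, Nat.odd_iff.mpr (by omega), Nat.even_iff.mpr (by omega)⟩
  rcases hadj with hadj | hadj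
  · obtain rfl := sortedList_index_succ_of_getElem_eq_succ hadj
    exact Or.inl ((h.2.2 i hj hj').mp hadj)
  · obtain rfl := sortedList_index_succ_of_getElem_eq_succ hadj
    exact Or.inr ((h.2.2 j hi hi').mp hadj)

end Sim

namespace PInj

variable {n : ℕ} (α β : PInj n)

lemma mem_dom_iff {x : ℕ} : x ∈ α.dom ↔ ∃ y, α.f x = some y := by
  simp only [dom, Finset.mem_filter, Option.isSome_iff_exists]
  exact ⟨fun h => h.2, fun ⟨y, hy⟩ => ⟨(α.mem_bounds hy).1, y, hy⟩⟩

lemma mem_im_iff {y : ℕ} : y ∈ α.im ↔ ∃ x, α.f x = some y := by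
  simp only [im, Finset.mem_filter]
  exact ⟨fun h => h.2, fun ⟨x, hx⟩ => ⟨(α.mem_bounds hx).2, x, hx⟩⟩

lemma mem_dom_comp_iff {x : ℕ} : x ∈ (α.comp β).dom ↔ ∃ y, α.f x = some y ∧ y ∈ β.dom := by
  simp only [mem_dom_iff, comp, Option.bind_eq_some_iff]
  grind

lemma mem_im_comp_iff {z : ℕ} : z ∈ (α.comp β).im ↔ ∃ y ∈ α.im, β.f y = some z := by
  simp only [mem_im_iff, comp, Option.bind_eq_some_iff]
  grind

end PInj

/-- The `i`-th smallest element of `A` goes to the `i`-th smallest element of `B`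
(undefined where `B` has no `i`-th element). -/
noncomputable def matchFun (A B : Finset ℕ) (x : ℕ) : Option ℕ :=
  if x ∈ A then (sortedList B)[(sortedList A).idxOf x]? else none

lemma matchFun_eq_some_iff {A B : Finset ℕ} {x y : ℕ} :
    matchFun A B x = some y ↔ ∃ i, ∃ (hi : i < (sortedList A).length)
      (hi' : i < (sortedList B).length), (sortedList A)[i] = x ∧ (sortedList B)[i] = y := by
  unfold matchFun
  split_ifs with hx
  · rw [List.getElem?_eq_some_iff]
    constructor
    · rintro ⟨hlt, rfl⟩
      have hidx := List.idxOf_lt_length_iff.mpr (mem_sortedList.mpr hx)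
      exact ⟨_, hidx, hlt, List.getElem_idxOf hidx, rfl⟩
    · rintro ⟨i, hi, hi', rfl, rfl⟩
      have hidx : (sortedList A).idxOf (sortedList A)[i] = i :=
        (Finset.sort_nodup _ _).idxOf_getElem i hi
      simpa only [hidx, exists_prop, and_true] using hi'
  · simp only [false_iff, not_exists, not_and]
    rintro i hi - rfl -
    exact hx (mem_sortedList.mp (List.getElem_mem hi))

section Match

variable {n : ℕ} {A B : Finset ℕ} (hA : A ⊆ Finset.Icc 1 n) (hB : B ⊆ Finset.Icc 1 n)

noncomputable def matchPInj : PInj n where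
  f := matchFun A B
  mem_bounds := by
    intro x y h
    obtain ⟨i, hi, hi', rfl, rfl⟩ := matchFun_eq_some_iff.mp h
    exact ⟨hA (mem_sortedList.mp (List.getElem_mem hi)),
      hB (mem_sortedList.mp (List.getElem_mem hi'))⟩
  inj := by
    intro x₁ x₂ y h₁ h₂
    obtain ⟨i, hi, hi', rfl, rfl⟩ := matchFun_eq_some_iff.mp h₁
    obtain ⟨j, hj, hj', rfl, hij⟩ := matchFun_eq_some_iff.mp h₂
    obtain rfl := sortedList_getElem_inj_iff.mp hij
    rfl

lemma matchPInj_dom (hc : A.card = B.card) : (matchPInj hA hB).dom = A := by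
  ext x
  rw [PInj.mem_dom_iff, ← mem_sortedList, List.mem_iff_getElem]
  simp only [matchPInj, matchFun_eq_some_iff]
  constructor
  · rintro ⟨y, i, hi, -, hx, -⟩
    exact ⟨i, hi, hx⟩
  · rintro ⟨i, hi, hx⟩
    have hi' : i < (sortedList B).length := by
      rwa [length_sortedList, ← hc, ← length_sortedList]
    exact ⟨_, i, hi, hi', hx, rfl⟩

lemma matchPInj_im (hc : A.card = B.card) : (matchPInj hA hB).im = B := by
  ext y
  rw [PInj.mem_im_iff, ← mem_sortedList, List.mem_iff_getElem]
  simp only [matchPInj, matchFun_eq_some_iff]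
  constructor
  · rintro ⟨x, i, -, hi', -, hy⟩
    exact ⟨i, hi', hy⟩
  · rintro ⟨i, hi', hy⟩
    have hi : i < (sortedList A).length := by
      rwa [length_sortedList, hc, ← length_sortedList]
    exact ⟨_, i, hi, hi', rfl, hy⟩

lemma matchPInj_mem_IOF (h : sim A B) : matchPInj hA hB ∈ IOF n := by
  simp only [IOF, matchPInj, Set.mem_ofPred_eq, matchFun_eq_some_iff]
  refine ⟨?_, ?_, ?_, ?_⟩
  · rintro _ _ _ _ ⟨i, hi, hi', rfl, rfl⟩ ⟨j, hj, hj', rfl, rfl⟩ hij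
    exact sortedList_getElem_lt_getElem_iff.mpr (sortedList_getElem_lt_getElem_iff.mp hij)
  · rintro _ _ ⟨i, hi, hi', rfl, rfl⟩
    exact h.2.1 i hi hi'
  · rintro _ _ _ _ ⟨i, hi, hi', rfl, rfl⟩ ⟨j, hj, hj', rfl, rfl⟩ hf
    exact h.fence_getElem hi' hj' hf
  · rintro _ _ _ _ ⟨i, hi, hi', rfl, rfl⟩ ⟨j, hj, hj', rfl, rfl⟩ hf
    exact (sim.symm h).fence_getElem hi hj hf

lemma matchPInj_comp_dom (hc : A.card = B.card) (β : PInj n) {r : ℕ} (hr : r < A.card)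
    (hβ : B ∩ β.dom = del B r) : ((matchPInj hA hB).comp β).dom = del A r := by
  ext x
  have hr' : r < B.card := hc ▸ hr
  rw [PInj.mem_dom_comp_iff, mem_del_iff hr]
  simp only [matchPInj, matchFun_eq_some_iff]
  constructor
  · rintro ⟨_, ⟨i, hi, hi', hx, rfl⟩, hdom⟩
    have hmem : (sortedList B)[i] ∈ del B r :=
      hβ ▸ Finset.mem_inter.mpr ⟨mem_sortedList.mp (List.getElem_mem hi'), hdom⟩
    obtain ⟨j, hj, hjr, hji⟩ := (mem_del_iff hr').mp hmem
    obtain rfl := sortedList_getElem_inj_iff.mp hji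
    exact ⟨j, hi, hjr, hx⟩
  · rintro ⟨i, hi, hir, hx⟩
    have hi' : i < (sortedList B).length := by
      rwa [length_sortedList, ← hc, ← length_sortedList]
    have hmem : (sortedList B)[i] ∈ del B r := (mem_del_iff hr').mpr ⟨i, hi', hir, rfl⟩
    exact ⟨_, ⟨i, hi, hi', hx, rfl⟩, (Finset.mem_inter.mp (hβ ▸ hmem)).2⟩

lemma comp_matchPInj_im (hc : A.card = B.card) (α : PInj n) {s : ℕ} (hs : s < A.card)
    (hα : α.im ∩ A = del A s) : (α.comp (matchPInj hA hB)).im = del B s := by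
  ext z
  have hs' : s < B.card := hc ▸ hs
  rw [PInj.mem_im_comp_iff, mem_del_iff hs']
  simp only [matchPInj, matchFun_eq_some_iff]
  constructor
  · rintro ⟨_, him, i, hi, hi', rfl, hz⟩
    have hmem : (sortedList A)[i] ∈ del A s :=
      hα ▸ Finset.mem_inter.mpr ⟨him, mem_sortedList.mp (List.getElem_mem hi)⟩
    obtain ⟨j, hj, hjs, hji⟩ := (mem_del_iff hs).mp hmem
    obtain rfl := sortedList_getElem_inj_iff.mp hji
    exact ⟨j, hi', hjs, hz⟩
  · rintro ⟨i, hi', his, hz⟩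
    have hi : i < (sortedList A).length := by
      rwa [length_sortedList, hc, ← length_sortedList]
    have hmem : (sortedList A)[i] ∈ del A s := (mem_del_iff hs).mpr ⟨i, hi, his, rfl⟩
    exact ⟨_, (Finset.mem_inter.mp (hα ▸ hmem)).1, i, hi, hi', rfl, hz⟩

end Match

theorem statement_10_general (n : ℕ) (P : Set (Finset ℕ)) (hP : Admissible n P)
    (y₁ y₂ z₁ z₂ : Finset ℕ) (hy₁ : y₁ ∈ P) (hy₂ : y₂ ∈ P) (hz₁ : z₁ ∈ P) (hz₂ : z₂ ∈ P)
    (hcard : y₁.card = z₁.card)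
    (r s : ℕ) (hr : r < y₁.card) (hs : s < y₁.card)
    (hry : del y₁ r = y₁ ∩ z₁) (hsz : del z₁ s = y₁ ∩ z₁)
    (hsimy : sim y₂ y₁) (hsimz : sim z₂ z₁) :
    ∃ θ ∈ IX n P, ∃ δ ∈ IX n P, θ.rank = y₁.card ∧ δ.rank = y₁.card ∧
      (θ.comp δ).dom = del y₂ r ∧ (θ.comp δ).im = del z₂ s := by
  have hy₁n := hP.1 y₁ hy₁
  have hz₁n := hP.1 z₁ hz₁
  have hy₂n := hP.1 y₂ hy₂
  have hz₂n := hP.1 z₂ hz₂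
  let θ := matchPInj hy₂n hy₁n
  let δ := matchPInj hz₁n hz₂n
  have hθdom : θ.dom = y₂ := matchPInj_dom hy₂n hy₁n hsimy.1
  have hδdom : δ.dom = z₁ := matchPInj_dom hz₁n hz₂n hsimz.1.symm
  have hθim : θ.im = y₁ := matchPInj_im hy₂n hy₁n hsimy.1
  refine ⟨θ, ⟨matchPInj_mem_IOF hy₂n hy₁n hsimy, hθdom ▸ hy₂⟩,
    δ, ⟨matchPInj_mem_IOF hz₁n hz₂n (sim.symm hsimz), hδdom ▸ hz₁⟩,
    (congrArg Finset.card hθdom).trans hsimy.1, (congrArg Finset.card hδdom).trans hcard.symm,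
    ?_, ?_⟩
  · exact matchPInj_comp_dom hy₂n hy₁n hsimy.1 δ (hsimy.1 ▸ hr) (hδdom ▸ hry.symm)
  · exact comp_matchPInj_im hz₁n hz₂n hsimz.1.symm θ (hcard ▸ hs) (hθim ▸ hsz.symm)

/-- (Lemma on domains and images.) Under the stated hypotheses
there exist `θ, δ ∈ I_{P*}` of rank `|y₁|` with `dom(θδ) = y₂^[r]` and
`im(θδ) = z₂^[s]`. (Indices `r, s` are 0-based here.) -/
theorem statement_10 (n : ℕ) (hn : 0 < n) (P : Set (Finset ℕ)) (hP : Admissible n P)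
    (y₁ y₂ z₁ z₂ : Finset ℕ) (hy₁ : y₁ ∈ P) (hy₂ : y₂ ∈ P) (hz₁ : z₁ ∈ P) (hz₂ : z₂ ∈ P)
    (hcard : y₁.card = z₁.card) (h2 : 2 ≤ y₁.card)
    (r s : ℕ) (hr : r < y₁.card) (hs : s < y₁.card)
    (hry : del y₁ r = y₁ ∩ z₁) (hsz : del z₁ s = y₁ ∩ z₁)
    (hsimy : sim y₂ y₁) (hsimz : sim z₂ z₁)
    (hsim₁ : sim (del y₂ r) (del z₂ s)) (hsim₂ : sim (del z₂ s) (y₁ ∩ z₁)) :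
    ∃ θ ∈ IX n P, ∃ δ ∈ IX n P, θ.rank = y₁.card ∧ δ.rank = y₁.card ∧
      (θ.comp δ).dom = del y₂ r ∧ (θ.comp δ).im = del z₂ s :=
  statement_10_general n P hP y₁ y₂ z₁ z₂ hy₁ hy₂ hz₁ hz₂ hcard r s hr hs hry hsz hsimy hsimz

end IOFpar
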